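/- arXiv:2005.07776 — 2 statements merged into one kernel-verified Lean document; each statement's English description precedes it below -/
import Mathlib

section
/- The mean squared error of the perturbed quantized value M = Q(g) + s·(N - m·p) satisfies E[(M - g)²] ≤ s²·(1/4 + m·p·(1-p)), where the quantization error and the binomial noise are independent. -/
/-! With `lo = B r`, `hi = B (r + 1) = lo + s` and `d = k - m p`, the perturbed rounding error
of `g` has conditional second moment `(g - lo) (hi - g) + s² d²`: the cross term vanishes because
stochastic rounding is unbiased. Averaging over `k ~ Bin(m, p)` turns `d²` into the binomial
variance `m p (1 - p)`, and `(g - lo) (hi - g) ≤ s² / 4` by AM-GM. -/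

open Finset

lemma sum_choose_mul_pow_mul_pow (m : ℕ) (p : ℝ) :
    ∑ k ∈ range (m + 1), (m.choose k : ℝ) * p ^ k * (1 - p) ^ (m - k) = 1 := by
  have h := add_pow p (1 - p) m
  rw [add_sub_cancel, one_pow] at h
  exact (sum_congr rfl fun k _ => by ring).trans h.symm

lemma sum_choose_mul_pow_mul_pow_mul_sq_sub (m : ℕ) (p : ℝ) :
    ∑ k ∈ range (m + 1),
      (m.choose k : ℝ) * p ^ k * (1 - p) ^ (m - k) * ((k : ℝ) - m * p) ^ 2
      = m * p * (1 - p) := by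
  have h := congrArg (Polynomial.eval p) (bernsteinPolynomial.variance ℝ m)
  simp only [Polynomial.eval_finsetSum, Polynomial.eval_mul, Polynomial.eval_pow,
    Polynomial.eval_sub, Polynomial.eval_natCast, Polynomial.eval_X,
    Polynomial.eval_one, nsmul_eq_mul, bernsteinPolynomial] at h
  rw [← h]
  exact sum_congr rfl fun k _ => by ring

lemma stochasticRounding_perturbed_sq_error {lo hi s g d : ℝ} (hs : s ≠ 0) (hhi : hi = lo + s) :
    (g - lo) / s * (hi + s * d - g) ^ 2 + (hi - g) / s * (lo + s * d - g) ^ 2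
      = (g - lo) * (hi - g) + s ^ 2 * d ^ 2 := by
  subst hhi
  field_simp
  ring

theorem stmt6_general (G : ℝ) (r : ℕ)
    (s : ℝ)
    (B : ℕ → ℝ) (hB : ∀ r', B r' = -G + (r' : ℝ) * s)
    (g : ℝ)
    (m : ℕ) (p : ℝ) :
    ∑ k ∈ Finset.range (m + 1),
      (m.choose k : ℝ) * p ^ k * (1 - p) ^ (m - k) *
        ((g - B r) / s * (B (r + 1) + s * ((k : ℝ) - (m : ℝ) * p) - g) ^ 2
          + (B (r + 1) - g) / s * (B r + s * ((k : ℝ) - (m : ℝ) * p) - g) ^ 2)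
      ≤ s ^ 2 * (1 / 4 + (m : ℝ) * p * (1 - p)) := by
  rcases eq_or_ne s 0 with rfl | hs
  · simp -- `x / 0 = 0` kills every summand
  have hstep : B (r + 1) = B r + s := by
    rw [hB, hB]
    push_cast
    ring
  simp_rw [stochasticRounding_perturbed_sq_error hs hstep, mul_add, sum_add_distrib,
    ← sum_mul, sum_choose_mul_pow_mul_pow, mul_left_comm _ (s ^ 2), ← mul_sum,
    sum_choose_mul_pow_mul_pow_mul_sq_sub]
  have hamgm := four_mul_le_sq_add (g - B r) (B (r + 1) - g)
  rw [hstep] at hamgm ⊢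
  linarith

/-- MSE of the perturbed quantized value M = Q(g) + s (N - m p):
E[(M - g)²] ≤ s² (1/4 + m p (1 - p)), with the quantization randomness
independent of the binomial noise. -/
theorem stmt6 (G : ℝ) (hG : 0 < G) (l : ℕ) (hl : 2 ≤ l) (r : ℕ) (hr : r < l)
    (s : ℝ) (hs : s = 2 * G / ((l : ℝ) - 1))
    (B : ℕ → ℝ) (hB : ∀ r', B r' = -G + (r' : ℝ) * s)
    (g : ℝ) (hg1 : B r ≤ g) (hg2 : g ≤ B (r + 1))
    (m : ℕ) (hm : 0 < m) (p : ℝ) (hp0 : 0 ≤ p) (hp1 : p ≤ 1) :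
    ∑ k ∈ Finset.range (m + 1),
      (m.choose k : ℝ) * p ^ k * (1 - p) ^ (m - k) *
        ((g - B r) / s * (B (r + 1) + s * ((k : ℝ) - (m : ℝ) * p) - g) ^ 2
          + (B (r + 1) - g) / s * (B r + s * ((k : ℝ) - (m : ℝ) * p) - g) ^ 2)
      ≤ s ^ 2 * (1 / 4 + (m : ℝ) * p * (1 - p)) :=
  stmt6_general G r s B hB g m p
end

section
/- SGD convergence for strongly convex smooth functions: let f: ℝᵈ → ℝ be λ-strongly convex and μ-smooth with minimizer w*. Suppose the SGD iterates satisfy w_{t+1} = w_t - γ_t·ĝ_t with γ_t = 1/(λt), where ĝ_t is an unbiased stochastic subgradient at w_t with E[‖ĝ_t‖₂²] ≤ σ²_{g,t}. Then |E[f(w_T)] - f(w*)| ≤ (2μ/(λ²T²))·Σ_{t=1}^{T} σ²_{g,t}. -/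
/-! Strong convexity and `∇f(w*) = 0` give `λ‖w - w*‖² ≤ ⟪w - w*, ∇f w⟫`. Since `w_t - w*` is
measurable for the σ-algebra generated by `w_t`, unbiasedness lets `∇f(w_t)` replace `ĝ_t` in
`E⟪w_t - w*, ĝ_t⟫`, and expanding the square in the update gives, for `R_t = E‖w_t - w*‖²`,
`R_{t+1} ≤ (1 - 2/t) R_t + σ_t² / (λ² t²)`. Induction on this recursion yields
`R_t ≤ 4 / (λ² t²) · Σ_{s ≤ t} σ_s²`, and smoothness at the minimiser `w*` turns it into the bound
on `E f(w_T) - f(w*) ≥ 0`. -/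

open MeasureTheory ProbabilityTheory Finset

section Recursion

variable {R a : ℕ → ℝ}

theorem le_of_recursion_succ (ha : ∀ t, 0 ≤ a t)
    (hrec : ∀ t, 1 ≤ t → R (t + 1) ≤ (1 - 2 / t) * R t + a t / t ^ 2) (hR : ∀ t, 0 ≤ R t) :
    ∀ t, 1 ≤ t → R (t + 1) ≤ 4 / ((t : ℝ) + 1) ^ 2 * ∑ s ∈ Icc 1 t, a s := by
  intro t ht
  induction t, ht using Nat.le_induction with
  | base =>
    have := hrec 1 le_rfl
    norm_num at this ⊢
    linarith [hR 1]
  | succ t ht ih =>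
    have hs : (2 : ℝ) ≤ (t : ℝ) + 1 := by
      have : (1 : ℝ) ≤ t := by exact_mod_cast ht
      linarith
    set s : ℝ := (t : ℝ) + 1
    have hS : 0 ≤ ∑ s ∈ Icc 1 t, a s := sum_nonneg fun s _ => ha s
    have hcoef : 0 ≤ 1 - 2 / s := by rw [sub_nonneg, div_le_one (by linarith)]; exact hs
    have c1 : (1 - 2 / s) * (4 / s ^ 2) ≤ 4 / (s + 1) ^ 2 := by
      rw [show (1 - 2 / s) * (4 / s ^ 2) = 4 * (s - 2) / s ^ 3 by field_simp,
        div_le_div_iff₀ (by positivity) (by positivity)]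
      nlinarith
    have c2 : 1 / s ^ 2 ≤ 4 / (s + 1) ^ 2 := by
      rw [div_le_div_iff₀ (by positivity) (by positivity)]; nlinarith
    have hrec' := hrec (t + 1) (by omega)
    push_cast at hrec' ⊢
    rw [sum_Icc_succ_top (by omega)]
    calc R (t + 1 + 1) ≤ (1 - 2 / s) * R (t + 1) + a (t + 1) / s ^ 2 := hrec'
      _ ≤ (1 - 2 / s) * (4 / s ^ 2 * ∑ s ∈ Icc 1 t, a s) + 1 / s ^ 2 * a (t + 1) := by
        rw [one_div_mul_eq_div]; gcongr
      _ ≤ 4 / (s + 1) ^ 2 * (∑ s ∈ Icc 1 t, a s + a (t + 1)) := by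
        rw [← mul_assoc, mul_add]; gcongr; exact ha _

theorem le_of_recursion (ha : ∀ t, 0 ≤ a t)
    (hrec : ∀ t, 1 ≤ t → R (t + 1) ≤ (1 - 2 / t) * R t + a t / t ^ 2) (hR : ∀ t, 0 ≤ R t)
    (t : ℕ) (ht : 1 ≤ t) : R t ≤ 4 / (t : ℝ) ^ 2 * ∑ s ∈ Icc 1 t, a s := by
  obtain rfl | ht := ht.eq_or_lt
  · -- the coefficient `1 - 2 / 1` is negative, so the first step bounds `R 1` via `0 ≤ R 2`
    have := hrec 1 le_rfl
    norm_num at this ⊢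
    linarith [hR 2, ha 1]
  obtain ⟨s, rfl⟩ : ∃ s, t = s + 1 := ⟨t - 1, by omega⟩
  have hs := le_of_recursion_succ ha hrec hR s (by omega)
  push_cast
  refine hs.trans ?_
  gcongr
  · exact fun i _ _ => ha i
  · omega

end Recursion

section StrongConvexity

variable {E : Type*} [NormedAddCommGroup E] [InnerProductSpace ℝ E] [CompleteSpace E]
  {f : E → ℝ} {lam : ℝ} {c : E}

theorem gradient_eq_zero_of_forall_le (hmin : ∀ w, f c ≤ f w) : gradient f c = 0 := by
  rw [gradient, (IsLocalMin.fderiv_eq_zero (Filter.Eventually.of_forall hmin)), map_zero]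

theorem add_sq_norm_sub_le_of_forall_le
    (hsc : ∀ w w', f w + inner ℝ (gradient f w) (w' - w) + lam / 2 * ‖w' - w‖ ^ 2 ≤ f w')
    (hmin : ∀ w, f c ≤ f w) (w : E) : f c + lam / 2 * ‖w - c‖ ^ 2 ≤ f w := by
  simpa [gradient_eq_zero_of_forall_le hmin] using hsc c w

theorem mul_sq_norm_sub_le_inner_gradient
    (hsc : ∀ w w', f w + inner ℝ (gradient f w) (w' - w) + lam / 2 * ‖w' - w‖ ^ 2 ≤ f w')
    (hmin : ∀ w, f c ≤ f w) (w : E) :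
    lam * ‖w - c‖ ^ 2 ≤ inner ℝ (w - c) (gradient f w) := by
  have h := hsc w c
  rw [← neg_sub, inner_neg_right, norm_neg, real_inner_comm] at h
  linarith [add_sq_norm_sub_le_of_forall_le hsc hmin w]

end StrongConvexity

section SquareIntegrability

variable {Ω E : Type*} {m0 : MeasurableSpace Ω} {μ : Measure Ω} [NormedAddCommGroup E]
  {f : E → ℝ} {c : E} {X : Ω → E}

theorem memLp_two_sub_of_integrable_comp [IsFiniteMeasure μ] {lam : ℝ} (hlam : 0 < lam)
    (hf : ∀ x, f c + lam / 2 * ‖x - c‖ ^ 2 ≤ f x)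
    (hX : AEStronglyMeasurable X μ) (hfX : Integrable (fun ω => f (X ω)) μ) :
    MemLp (fun ω => X ω - c) 2 μ := by
  refine (memLp_two_iff_integrable_sq_norm (hX.sub aestronglyMeasurable_const)).2 ?_
  refine (((hfX.sub (integrable_const (f c))).const_mul (2 / lam))).mono'
    ((hX.sub aestronglyMeasurable_const).norm.pow 2) (ae_of_all _ fun ω => ?_)
  simp only [Pi.sub_apply]
  rw [Real.norm_eq_abs, abs_of_nonneg (by positivity), div_mul_eq_mul_div, le_div_iff₀ hlam]
  linarith [hf (X ω)]

theorem integral_comp_sub_le_of_le_sq_norm [IsProbabilityMeasure μ] {mu : ℝ}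
    (hf : ∀ x, f x - f c ≤ mu / 2 * ‖x - c‖ ^ 2) (hfX : Integrable (fun ω => f (X ω)) μ)
    (hXc : MemLp (fun ω => X ω - c) 2 μ) :
    ∫ ω, f (X ω) ∂μ - f c ≤ mu / 2 * ∫ ω, ‖X ω - c‖ ^ 2 ∂μ := by
  have h := integral_mono (f := fun ω => f (X ω) - f c) (hfX.sub (integrable_const (f c)))
    (((memLp_two_iff_integrable_sq_norm hXc.1).1 hXc).const_mul (mu / 2)) fun ω => hf (X ω)
  rwa [integral_sub hfX (integrable_const _), integral_const_mul, integral_const, probReal_univ,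
    one_smul] at h

end SquareIntegrability

section StochasticStep

variable {Ω E : Type*} {m0 : MeasurableSpace Ω} {μ : Measure Ω}
  [NormedAddCommGroup E] [InnerProductSpace ℝ E]

theorem integrable_inner_of_memLp_two {X Y : Ω → E} (hX : MemLp X 2 μ) (hY : MemLp Y 2 μ) :
    Integrable (fun ω => inner ℝ (X ω) (Y ω)) μ :=
  memLp_one_iff_integrable.1 ((innerSL ℝ).memLp_of_bilin 1 hX hY)

theorem integral_sq_norm_sub_smul {X g : Ω → E} (γ : ℝ) (hX : MemLp X 2 μ) (hg : MemLp g 2 μ) :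
    ∫ ω, ‖X ω - γ • g ω‖ ^ 2 ∂μ = ∫ ω, ‖X ω‖ ^ 2 ∂μ
      - 2 * γ * ∫ ω, inner ℝ (X ω) (g ω) ∂μ + γ ^ 2 * ∫ ω, ‖g ω‖ ^ 2 ∂μ := by
  have hX2 := (memLp_two_iff_integrable_sq_norm hX.1).1 hX
  have hg2 := (memLp_two_iff_integrable_sq_norm hg.1).1 hg
  have hXg := integrable_inner_of_memLp_two hX hg
  simp_rw [norm_sub_sq_real, inner_smul_right, norm_smul, mul_pow, Real.norm_eq_abs, sq_abs]
  rw [integral_add, integral_sub, integral_const_mul, integral_const_mul, integral_const_mul,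
    mul_assoc]
  all_goals fun_prop

variable [CompleteSpace E] [MeasurableSpace E] [BorelSpace E] [SecondCountableTopology E]
  [IsFiniteMeasure μ]

theorem mul_integral_sq_norm_le_integral_inner {X g : Ω → E} {G : E → E} {c : E} {lam : ℝ}
    (hX : Measurable X) (hXc : MemLp (fun ω => X ω - c) 2 μ) (hg : MemLp g 2 μ)
    (hunb : μ[g | MeasurableSpace.comap X inferInstance] =ᵐ[μ] fun ω => G (X ω))
    (hG : ∀ x, lam * ‖x - c‖ ^ 2 ≤ inner ℝ (x - c) (G x)) :
    lam * ∫ ω, ‖X ω - c‖ ^ 2 ∂μ ≤ ∫ ω, inner ℝ (X ω - c) (g ω) ∂μ := by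
  have hm := hX.comap_le
  have hXm : StronglyMeasurable[MeasurableSpace.comap X inferInstance] (fun ω => X ω - c) :=
    ((comap_measurable X).sub_const c).stronglyMeasurable
  have hpull : (fun ω => inner ℝ (X ω - c) (G (X ω)))
      =ᵐ[μ] μ[fun ω => inner ℝ (X ω - c) (g ω) | MeasurableSpace.comap X inferInstance] := by
    filter_upwards [condExp_bilin_of_stronglyMeasurable_left (innerSL ℝ) hXm
      (integrable_inner_of_memLp_two hXc hg) (hg.integrable one_le_two), hunb] with ω h1 h2
    rw [h2] at h1
    exact h1.symm
  calc lam * ∫ ω, ‖X ω - c‖ ^ 2 ∂μ = ∫ ω, lam * ‖X ω - c‖ ^ 2 ∂μ := (integral_const_mul _ _).symm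
    _ ≤ ∫ ω, inner ℝ (X ω - c) (G (X ω)) ∂μ :=
      integral_mono
        (((memLp_two_iff_integrable_sq_norm hXc.1).1 hXc).const_mul lam)
        (integrable_condExp.congr hpull.symm) fun ω => hG (X ω)
    _ = ∫ ω, inner ℝ (X ω - c) (g ω) ∂μ := by rw [integral_congr_ae hpull, integral_condExp hm]

theorem integral_sq_norm_sub_le_of_sgd_step {X X' g : Ω → E} {G : E → E} {c : E} {lam γ s : ℝ}
    (hγ : 0 < γ) (hstep : ∀ ω, X' ω = X ω - γ • g ω) (hX : Measurable X)
    (hXc : MemLp (fun ω => X ω - c) 2 μ) (hX'c : MemLp (fun ω => X' ω - c) 2 μ)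
    (hunb : μ[g | MeasurableSpace.comap X inferInstance] =ᵐ[μ] fun ω => G (X ω))
    (hG : ∀ x, lam * ‖x - c‖ ^ 2 ≤ inner ℝ (x - c) (G x)) (hmom : ∫ ω, ‖g ω‖ ^ 2 ∂μ ≤ s) :
    ∫ ω, ‖X' ω - c‖ ^ 2 ∂μ ≤ (1 - 2 * γ * lam) * ∫ ω, ‖X ω - c‖ ^ 2 ∂μ + γ ^ 2 * s := by
  -- `hmom` alone does not make `‖g‖²` integrable (a non-integrable function has integral `0`)
  have hg : MemLp g 2 μ := by
    refine ((hXc.sub hX'c).const_smul γ⁻¹).ae_eq (ae_of_all _ fun ω => ?_)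
    simp [hstep, hγ.ne']
  have hinner := mul_integral_sq_norm_le_integral_inner hX hXc hg hunb hG
  have hexpand : ∫ ω, ‖X' ω - c‖ ^ 2 ∂μ = ∫ ω, ‖X ω - c‖ ^ 2 ∂μ
      - 2 * γ * ∫ ω, inner ℝ (X ω - c) (g ω) ∂μ + γ ^ 2 * ∫ ω, ‖g ω‖ ^ 2 ∂μ := by
    simp_rw [hstep, sub_right_comm _ (γ • _) c]
    exact integral_sq_norm_sub_smul γ hXc hg
  rw [hexpand]
  nlinarith [mul_le_mul_of_nonneg_left hinner (by positivity : (0 : ℝ) ≤ 2 * γ),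
    mul_le_mul_of_nonneg_left hmom (sq_nonneg γ)]

end StochasticStep

theorem stmt13_general {Ω : Type*} [MeasureSpace Ω]
    (hprob : IsProbabilityMeasure (volume : Measure Ω))
    (d : ℕ) (f : EuclideanSpace ℝ (Fin d) → ℝ) (lam mu : ℝ)
    (hlam : 0 < lam) (hmu : 0 < mu)
    (wstar : EuclideanSpace ℝ (Fin d))
    (hsc : ∀ w w', f w + (inner ℝ (gradient f w) (w' - w) : ℝ) + lam / 2 * ‖w' - w‖ ^ 2 ≤ f w')
    (hsmooth : ∀ w, f w - f wstar ≤ mu / 2 * ‖w - wstar‖ ^ 2)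
    (hmin : ∀ w, f wstar ≤ f w)
    (T : ℕ) (hT : 0 < T)
    (w : ℕ → Ω → EuclideanSpace ℝ (Fin d)) (ghat : ℕ → Ω → EuclideanSpace ℝ (Fin d))
    (σ : ℕ → ℝ)
    (hmeasw : ∀ t, Measurable (w t))
    (hupdate : ∀ t, 1 ≤ t → ∀ ω, w (t + 1) ω = w t ω - (1 / (lam * t)) • ghat t ω)
    (hunbiased : ∀ t, (volume : Measure Ω)[ghat t | MeasurableSpace.comap (w t) inferInstance]
      =ᵐ[volume] fun ω => gradient f (w t ω))
    (hmom : ∀ t, ∫ ω, ‖ghat t ω‖ ^ 2 ≤ σ t ^ 2)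
    (hint : ∀ t, Integrable (fun ω => f (w t ω))) :
    |(∫ ω, f (w T ω)) - f wstar| ≤ 2 * mu / (lam ^ 2 * (T : ℝ) ^ 2) * ∑ t ∈ Finset.Icc 1 T, σ t ^ 2 := by
  have := hprob
  have hcvx := add_sq_norm_sub_le_of_forall_le hsc hmin
  have hdist : ∀ t, MemLp (fun ω => w t ω - wstar) 2 := fun t =>
    memLp_two_sub_of_integrable_comp hlam hcvx (hmeasw t).aestronglyMeasurable (hint t)
  have hrec : ∀ t, 1 ≤ t → ∫ ω, ‖w (t + 1) ω - wstar‖ ^ 2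
      ≤ (1 - 2 / t) * (∫ ω, ‖w t ω - wstar‖ ^ 2) + σ t ^ 2 / lam ^ 2 / (t : ℝ) ^ 2 := by
    intro t ht
    have hstep := integral_sq_norm_sub_le_of_sgd_step (by positivity) (hupdate t ht) (hmeasw t)
      (hdist t) (hdist (t + 1)) (hunbiased t) (mul_sq_norm_sub_le_inner_gradient hsc hmin)
      (hmom t)
    convert hstep using 3 <;> field_simp
  have hdistT := le_of_recursion (R := fun t => ∫ ω, ‖w t ω - wstar‖ ^ 2)
    (a := fun t => σ t ^ 2 / lam ^ 2)
    (fun t => by positivity) hrec (fun t => integral_nonneg fun ω => sq_nonneg _) T hT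
  have hlow : f wstar ≤ ∫ ω, f (w T ω) := by
    simpa using integral_mono (integrable_const _) (hint T) fun ω => hmin (w T ω)
  rw [abs_of_nonneg (sub_nonneg.2 hlow)]
  calc _ ≤ mu / 2 * ∫ ω, ‖w T ω - wstar‖ ^ 2 :=
        integral_comp_sub_le_of_le_sq_norm hsmooth (hint T) (hdist T)
    _ ≤ mu / 2 * (4 / (T : ℝ) ^ 2 * ∑ t ∈ Icc 1 T, σ t ^ 2 / lam ^ 2) := by gcongr
    _ = _ := by rw [← sum_div]; field_simp; ring

/-- SGD convergence for strongly convex smooth functions: for f λ-strongly convex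
and μ-smooth w.r.t. its minimizer w*, SGD with learning rate γₜ = 1/(λt) and unbiased
stochastic gradients with bounded second moments σ²_{g,t} satisfies
|E[f(w_T)] - f(w*)| ≤ (2μ/(λ²T²)) Σ_{t=1}^{T} σ²_{g,t}. -/
theorem stmt13 {Ω : Type*} [MeasureSpace Ω]
    (hprob : IsProbabilityMeasure (volume : Measure Ω))
    (d : ℕ) (f : EuclideanSpace ℝ (Fin d) → ℝ) (lam mu : ℝ)
    (hlam : 0 < lam) (hmu : 0 < mu)
    (wstar : EuclideanSpace ℝ (Fin d))
    (hdiff : Differentiable ℝ f)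
    (hsc : ∀ w w', f w + (inner ℝ (gradient f w) (w' - w) : ℝ) + lam / 2 * ‖w' - w‖ ^ 2 ≤ f w')
    (hsmooth : ∀ w, f w - f wstar ≤ mu / 2 * ‖w - wstar‖ ^ 2)
    (hmin : ∀ w, f wstar ≤ f w)
    (T : ℕ) (hT : 0 < T)
    (w : ℕ → Ω → EuclideanSpace ℝ (Fin d)) (ghat : ℕ → Ω → EuclideanSpace ℝ (Fin d))
    (σ : ℕ → ℝ)
    (hmeasw : ∀ t, Measurable (w t))
    (hmeasg : ∀ t, Measurable (ghat t))
    (hupdate : ∀ t, 1 ≤ t → ∀ ω, w (t + 1) ω = w t ω - (1 / (lam * t)) • ghat t ω)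
    (hunbiased : ∀ t, (volume : Measure Ω)[ghat t | MeasurableSpace.comap (w t) inferInstance]
      =ᵐ[volume] fun ω => gradient f (w t ω))
    (hmom : ∀ t, ∫ ω, ‖ghat t ω‖ ^ 2 ≤ σ t ^ 2)
    (hint : ∀ t, Integrable (fun ω => f (w t ω))) :
    |(∫ ω, f (w T ω)) - f wstar| ≤ 2 * mu / (lam ^ 2 * (T : ℝ) ^ 2) * ∑ t ∈ Finset.Icc 1 T, σ t ^ 2 :=
  stmt13_general hprob d f lam mu hlam hmu wstar hsc hsmooth hmin T hT w ghat σ hmeasw hupdate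
    hunbiased hmom hint
end
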